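/- arXiv:1609.07415 — 9 statements merged into one kernel-verified Lean document; each statement's English description precedes it below -/
import Mathlib

section
/- Let Θ' ⊆ ℝ^d be a compact set that is not a singleton, and let {P_θ : θ ∈ Θ'} be a family of probability measures on a measurable space that are pairwise mutually absolutely continuous. Then there is no measurable map g from the sample space to ℝ^d with range contained in Θ' such that ∫ g dP_θ = θ for all θ ∈ Θ'. -/
open MeasureTheory

theorem no_unbiased_of_compact {d : ℕ} {X : Type*} [MeasurableSpace X]
    (Θ' : Set (Fin d → ℝ)) (hcpt : IsCompact Θ')
    (hne : ∃ a ∈ Θ', ∃ b ∈ Θ', a ≠ b)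
    (P : (Fin d → ℝ) → Measure X)
    (hP : ∀ θ ∈ Θ', IsProbabilityMeasure (P θ))
    (hac : ∀ θ ∈ Θ', ∀ θ'' ∈ Θ', P θ ≪ P θ'') :
    ¬ ∃ g : X → (Fin d → ℝ), Measurable g ∧ (∀ x, g x ∈ Θ') ∧
      (∀ θ ∈ Θ', Integrable g (P θ)) ∧
      (∀ θ ∈ Θ', ∫ x, g x ∂(P θ) = θ) := by
  rintro ⟨g, hgm, hrange, hint, hunb⟩
  obtain ⟨a, ha, b, hb, hab⟩ := hne
  -- linear functional L θ = ∑ i, (b i - a i) * θ i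
  set L : (Fin d → ℝ) →L[ℝ] ℝ :=
    ∑ i, (b i - a i) • (ContinuousLinearMap.proj i : (Fin d → ℝ) →L[ℝ] ℝ) with hL
  have hLapp : ∀ θ : Fin d → ℝ, L θ = ∑ i, (b i - a i) * θ i := by
    intro θ
    simp [hL, ContinuousLinearMap.sum_apply, smul_eq_mul]
  have hLab : L a < L b := by
    rw [hLapp, hLapp]
    have : (0:ℝ) < ∑ i, (b i - a i) * b i - ∑ i, (b i - a i) * a i := by
      rw [← Finset.sum_sub_distrib]
      have : ∀ i : Fin d, (b i - a i) * b i - (b i - a i) * a i = (b i - a i)^2 := by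
        intro i; ring
      simp only [this]
      have hex : ∃ i, b i - a i ≠ 0 := by
        by_contra h
        push_neg at h
        apply hab
        funext i
        have := h i
        linarith
      obtain ⟨i, hi⟩ := hex
      exact Finset.sum_pos' (fun j _ => sq_nonneg _)
        ⟨i, Finset.mem_univ i, by positivity⟩
    linarith
  -- maximize L over Θ'
  obtain ⟨θ₁, hθ₁, hmax⟩ := hcpt.exists_isMaxOn ⟨a, ha⟩ L.continuous.continuousOn
  have hLb : L a < L θ₁ := lt_of_lt_of_le hLab (hmax hb)
  haveI := hP θ₁ hθ₁
  haveI := hP a ha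
  -- integral of L ∘ g at θ₁ is L θ₁
  have hcomp : ∀ θ ∈ Θ', ∫ x, L (g x) ∂(P θ) = L θ := by
    intro θ hθ
    rw [L.integral_comp_comm (hint θ hθ), hunb θ hθ]
  have hintL : ∀ θ ∈ Θ', Integrable (fun x => L (g x)) (P θ) := fun θ hθ =>
    L.integrable_comp (hint θ hθ)
  -- the nonnegative function L θ₁ - L (g x) has zero integral under P θ₁
  have hnonneg : ∀ x, 0 ≤ L θ₁ - L (g x) := fun x => by
    have : L (g x) ≤ L θ₁ := hmax (hrange x)
    linarith
  have hzero : ∫ x, (L θ₁ - L (g x)) ∂(P θ₁) = 0 := by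
    rw [integral_sub (integrable_const _) (hintL θ₁ hθ₁), hcomp θ₁ hθ₁,
      integral_const]
    simp
  have hae : (fun x => L θ₁ - L (g x)) =ᵐ[P θ₁] 0 := by
    have := (integral_eq_zero_iff_of_nonneg hnonneg
      ((integrable_const _).sub (hintL θ₁ hθ₁))).mp hzero
    exact this
  -- transfer to P a by absolute continuity
  have hae' : (fun x => L (g x)) =ᵐ[P a] (fun _ => L θ₁) := by
    have h1 : (fun x => L θ₁ - L (g x)) =ᵐ[P a] 0 :=
      (hac a ha θ₁ hθ₁).ae_le hae
    filter_upwards [h1] with x hx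
    have : L θ₁ - L (g x) = 0 := hx
    linarith
  have : ∫ x, L (g x) ∂(P a) = L θ₁ := by
    rw [integral_congr_ae hae', integral_const]
    simp
  rw [hcomp a ha] at this
  linarith
end

section
/- Let f : ℝ^d → ℝ be continuous and suppose the set Θ' = {θ : f(θ) = 0} is bounded and contains at least two points. Let {P_θ : θ ∈ Θ'} be pairwise mutually absolutely continuous probability measures. Then there exists no measurable g with range in Θ' such that ∫ g dP_θ = θ for all θ ∈ Θ'. -/
open MeasureTheory

theorem no_unbiased_on_bounded_zero_set {d : ℕ} {X : Type*} [MeasurableSpace X]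
    (f : (Fin d → ℝ) → ℝ) (hf : Continuous f)
    (hbdd : Bornology.IsBounded {θ : Fin d → ℝ | f θ = 0})
    (hne : ∃ a ∈ {θ : Fin d → ℝ | f θ = 0}, ∃ b ∈ {θ : Fin d → ℝ | f θ = 0}, a ≠ b)
    (P : (Fin d → ℝ) → Measure X)
    (hP : ∀ θ ∈ {θ : Fin d → ℝ | f θ = 0}, IsProbabilityMeasure (P θ))
    (hac : ∀ θ ∈ {θ : Fin d → ℝ | f θ = 0}, ∀ θ'' ∈ {θ : Fin d → ℝ | f θ = 0}, P θ ≪ P θ'') :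
    ¬ ∃ g : X → (Fin d → ℝ), Measurable g ∧ (∀ x, f (g x) = 0) ∧
      (∀ θ ∈ {θ : Fin d → ℝ | f θ = 0}, Integrable g (P θ)) ∧
      (∀ θ ∈ {θ : Fin d → ℝ | f θ = 0}, ∫ x, g x ∂(P θ) = θ) := by
  rintro ⟨g, hgm, hgrange, hgint, hgmean⟩
  set S : Set (Fin d → ℝ) := {θ | f θ = 0} with hS
  obtain ⟨a, ha, b0, hb0, hab⟩ := hne
  -- S is compact
  have hSclosed : IsClosed S := isClosed_eq hf continuous_const
  have hScpt : IsCompact S := Metric.isCompact_of_isClosed_isBounded hSclosed hbdd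
  -- nsq : sum of squares, continuous
  set nsq : (Fin d → ℝ) → ℝ := fun v => ∑ i, (v i) ^ 2 with hnsq
  have hnsqcont : Continuous nsq := by
    apply continuous_finset_sum
    intro i _
    exact ((continuous_apply i).pow 2)
  -- e maximizes nsq on S
  obtain ⟨e, heS, hemax'⟩ := hScpt.exists_isMaxOn ⟨a, ha⟩ hnsqcont.continuousOn
  have hemax : ∀ v ∈ S, nsq v ≤ nsq e := fun v hv => hemax' hv
  haveI := hP e heS
  have hinte : Integrable g (P e) := hgint e heS
  -- components of g are integrable and their means are e i
  have hcompint : ∀ i, Integrable (fun x => g x i) (P e) := fun i =>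
    (ContinuousLinearMap.proj (R := ℝ) (φ := fun _ : Fin d => ℝ) i).integrable_comp hinte
  have hmean : ∀ i, ∫ x, g x i ∂(P e) = e i := by
    intro i
    have := (ContinuousLinearMap.proj (R := ℝ) (φ := fun _ : Fin d => ℝ) i).integral_comp_comm
      hinte
    simp only [ContinuousLinearMap.proj_apply] at this
    rw [this, hgmean e heS]
  -- a bound on S
  obtain ⟨C, hC⟩ := hbdd.subset_ball 0
  have hSbound : ∀ v ∈ S, ∀ i, |v i| ≤ C := by
    intro v hv i
    have hvC : dist v 0 < C := hC hv
    have : dist (v i) 0 ≤ dist v 0 := dist_le_pi_dist v 0 i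
    have : |v i| ≤ dist v 0 := by simpa [Real.dist_eq] using this
    linarith
  have hgb : ∀ x, ∀ i, |g x i| ≤ C := fun x i => hSbound _ (hgrange x) i
  have heb : ∀ i, |e i| ≤ C := hSbound e heS
  -- D x = ∑ (g x i - e i)^2
  set D : X → ℝ := fun x => ∑ i, (g x i - e i) ^ 2 with hD
  have hDmeas : Measurable D := by
    apply Finset.measurable_sum
    intro i _
    exact (((measurable_pi_apply i).comp hgm).sub measurable_const).pow measurable_const
  have hDnonneg : ∀ x, 0 ≤ D x := fun x =>
    Finset.sum_nonneg fun i _ => sq_nonneg _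
  have hDbound : ∀ x, |D x| ≤ ∑ _i : Fin d, (2 * C) ^ 2 := by
    intro x
    rw [abs_of_nonneg (hDnonneg x)]
    apply Finset.sum_le_sum
    intro i _
    have h1 : |g x i - e i| ≤ 2 * C := by
      have := abs_sub (g x i) (e i)
      have := hgb x i
      have := heb i
      calc |g x i - e i| ≤ |g x i| + |e i| := abs_sub _ _
        _ ≤ 2 * C := by linarith
    calc (g x i - e i) ^ 2 = |g x i - e i| ^ 2 := (sq_abs _).symm
      _ ≤ (2 * C) ^ 2 := by
          apply pow_le_pow_left₀ (abs_nonneg _) h1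
  have hDint : Integrable D (P e) := by
    apply Integrable.mono' (integrable_const (∑ _i : Fin d, (2 * C) ^ 2))
      hDmeas.aestronglyMeasurable
    exact Filter.Eventually.of_forall hDbound
  -- integrability of nsq ∘ g
  have hnsqgint : Integrable (fun x => nsq (g x)) (P e) := by
    apply Integrable.mono' (integrable_const (∑ _i : Fin d, C ^ 2))
      ((hnsqcont.measurable.comp hgm).aestronglyMeasurable)
    apply Filter.Eventually.of_forall
    intro x
    show ‖nsq (g x)‖ ≤ _
    rw [Real.norm_eq_abs, abs_of_nonneg (Finset.sum_nonneg fun i _ => sq_nonneg (g x i))]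
    apply Finset.sum_le_sum
    intro i _
    calc (g x i) ^ 2 = |g x i| ^ 2 := (sq_abs _).symm
      _ ≤ C ^ 2 := pow_le_pow_left₀ (abs_nonneg _) (hgb x i) 2
  -- compute ∫ D
  have hDeq : ∀ x, D x = nsq (g x) - ∑ i, (2 * e i) * g x i + nsq e := by
    intro x
    simp only [hD, hnsq]
    rw [← Finset.sum_sub_distrib, ← Finset.sum_add_distrib]
    congr 1; funext i; ring
  have hlinint : Integrable (fun x => ∑ i, (2 * e i) * g x i) (P e) := by
    apply integrable_finset_sum
    intro i _
    exact (hcompint i).const_mul _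
  have hlin : ∫ x, ∑ i, (2 * e i) * g x i ∂(P e) = 2 * nsq e := by
      rw [integral_finset_sum]
      · have : ∀ i ∈ Finset.univ, ∫ x, (2 * e i) * g x i ∂(P e) = (2 * e i) * e i := by
          intro i _
          rw [integral_const_mul, hmean i]
        rw [Finset.sum_congr rfl this]
        simp only [hnsq, Finset.mul_sum]
        congr 1; funext i; ring
      · intro i _
        exact (hcompint i).const_mul _
  have hintD : ∫ x, D x ∂(P e) = (∫ x, nsq (g x) ∂(P e)) - nsq e := by
    have h0 : ∫ x, D x ∂(P e)
        = ∫ x, (nsq (g x) - ∑ i, (2 * e i) * g x i) + nsq e ∂(P e) := by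
      apply integral_congr_ae
      apply Filter.Eventually.of_forall
      intro x
      rw [hDeq x]
    have h1 : ∫ x, (nsq (g x) - ∑ i, (2 * e i) * g x i) + nsq e ∂(P e)
        = (∫ x, nsq (g x) - ∑ i, (2 * e i) * g x i ∂(P e)) + ∫ _x, nsq e ∂(P e) :=
      integral_add (hnsqgint.sub hlinint) (integrable_const _)
    have h2 : ∫ x, nsq (g x) - ∑ i, (2 * e i) * g x i ∂(P e)
        = (∫ x, nsq (g x) ∂(P e)) - ∫ x, ∑ i, (2 * e i) * g x i ∂(P e) :=
      integral_sub hnsqgint hlinint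
    rw [h0, h1, h2, hlin, integral_const]
    simp
    ring
  -- ∫ nsq (g x) ≤ nsq e
  have hintle : ∫ x, nsq (g x) ∂(P e) ≤ nsq e := by
    have : ∫ x, nsq (g x) ∂(P e) ≤ ∫ _x, nsq e ∂(P e) := by
      apply integral_mono hnsqgint (integrable_const _)
      intro x
      exact hemax _ (hgrange x)
    simpa using this
  have hintD_le : ∫ x, D x ∂(P e) ≤ 0 := by rw [hintD]; linarith
  have hintD_ge : 0 ≤ ∫ x, D x ∂(P e) :=
    integral_nonneg hDnonneg
  have hintD0 : ∫ x, D x ∂(P e) = 0 := le_antisymm hintD_le hintD_ge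
  -- hence D = 0 a.e., hence g = e a.e. (P e)
  have hDae : D =ᵐ[P e] 0 := by
    have := (integral_eq_zero_iff_of_nonneg hDnonneg hDint).mp hintD0
    exact this
  have hgae : g =ᵐ[P e] fun _ => e := by
    filter_upwards [hDae] with x hx
    have hx' : ∑ i, (g x i - e i) ^ 2 = 0 := hx
    funext i
    have hterm : (g x i - e i) ^ 2 = 0 := by
      exact (Finset.sum_eq_zero_iff_of_nonneg
        (fun j (_ : j ∈ Finset.univ) => sq_nonneg (g x j - e j))).mp hx' i (Finset.mem_univ i)
    have : g x i - e i = 0 := by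
      exact pow_eq_zero_iff (n := 2) (by norm_num) |>.mp hterm
    linarith
  -- pick b ∈ S with b ≠ e
  obtain ⟨b, hb, hbe⟩ : ∃ b ∈ S, b ≠ e := by
    by_cases h : a = e
    · exact ⟨b0, hb0, by rw [← h]; exact fun hh => hab hh.symm⟩
    · exact ⟨a, ha, h⟩
  haveI := hP b hb
  have hgaeb : g =ᵐ[P b] fun _ => e := (hac b hb e heS).ae_le hgae
  have : ∫ x, g x ∂(P b) = e := by
    rw [integral_congr_ae hgaeb, integral_const]
    simp
  rw [hgmean b hb] at this
  exact hbe this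
end

section
/- Let f : ℝ^d → ℝ be continuous and suppose the set Θ' = {θ : f(θ) ≤ 0} is bounded and not a singleton. Let {P_θ : θ ∈ Θ'} be pairwise mutually absolutely continuous probability measures. Then no unbiased estimator g with range contained in Θ' exists. -/
/-!
Separate two distinct points `a, b` of the parameter set `S` by a continuous linear functional `L`
and let `m` maximise `L` on the compact set `S`. Since the estimator takes values in `S`, `L ∘ g ≤ L m`,
while unbiasedness at `m` gives `E_m[L ∘ g] = L m`; hence `L ∘ g = L m` holds `P_m`-a.e., and so
`P_θ`-a.e. for every `θ ∈ S` by absolute continuity. Unbiasedness at `θ` then yields `L θ = L m`,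
so `L a = L b`, a contradiction.
-/

open MeasureTheory

lemma ae_eq_const_of_le_of_integral_eq {Ω : Type*} [MeasurableSpace Ω] {μ : Measure Ω}
    [IsProbabilityMeasure μ] {h : Ω → ℝ} {c : ℝ} (hint : Integrable h μ) (hle : ∀ x, h x ≤ c)
    (heq : ∫ x, h x ∂μ = c) : h =ᵐ[μ] fun _ ↦ c :=
  (integral_eq_iff_of_ae_le hint (integrable_const c) (.of_forall hle)).mp (by simpa using heq)

section Unbiased

variable {E X : Type*} [NormedAddCommGroup E] [NormedSpace ℝ E] [MeasurableSpace X]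

def IsUnbiasedOn (P : E → Measure X) (S : Set E) (g : X → E) : Prop :=
  ∀ θ ∈ S, Integrable g (P θ) ∧ ∫ x, g x ∂P θ = θ

variable [CompleteSpace E] {P : E → Measure X} {S : Set E} {g : X → E}

lemma IsUnbiasedOn.integral_clm_comp (hg : IsUnbiasedOn P S g) (L : StrongDual ℝ E) {θ : E}
    (hθ : θ ∈ S) : ∫ x, L (g x) ∂P θ = L θ := by
  rw [L.integral_comp_comm (hg θ hθ).1, (hg θ hθ).2]

lemma IsUnbiasedOn.apply_eq_of_isMaxOn (hg : IsUnbiasedOn P S g) (hgS : ∀ x, g x ∈ S)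
    (hP : ∀ θ ∈ S, IsProbabilityMeasure (P θ)) {L : StrongDual ℝ E} {m θ : E} (hm : m ∈ S)
    (hmax : IsMaxOn L S m) (hθ : θ ∈ S) (hac : P θ ≪ P m) : L θ = L m := by
  have hconst : (fun x ↦ L (g x)) =ᵐ[P m] fun _ ↦ L m :=
    have := hP m hm
    ae_eq_const_of_le_of_integral_eq (L.integrable_comp (hg m hm).1) (fun x ↦ hmax (hgS x))
      (hg.integral_clm_comp L hm)
  have := hP θ hθ
  calc L θ = ∫ x, L (g x) ∂P θ := (hg.integral_clm_comp L hθ).symm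
    _ = ∫ _, L m ∂P θ := integral_congr_ae (hac.ae_le hconst)
    _ = L m := by simp

theorem IsCompact.subsingleton_of_isUnbiasedOn (hS : IsCompact S)
    (hP : ∀ θ ∈ S, IsProbabilityMeasure (P θ)) (hac : ∀ θ ∈ S, ∀ θ' ∈ S, P θ ≪ P θ')
    (hg : IsUnbiasedOn P S g) (hgS : ∀ x, g x ∈ S) : S.Subsingleton := by
  intro a ha b hb
  by_contra hab
  obtain ⟨L, hL⟩ := SeparatingDual.exists_separating_of_ne (R := ℝ) hab
  obtain ⟨m, hm, hmax⟩ := hS.exists_isMaxOn ⟨a, ha⟩ L.continuous.continuousOn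
  have hLm {θ : E} (hθ : θ ∈ S) : L θ = L m :=
    hg.apply_eq_of_isMaxOn hgS hP hm hmax hθ (hac θ hθ m hm)
  exact hL ((hLm ha).trans (hLm hb).symm)

end Unbiased

theorem no_unbiased_on_bounded_sublevel_set {d : ℕ} {X : Type*} [MeasurableSpace X]
    (f : (Fin d → ℝ) → ℝ) (hf : Continuous f)
    (hbdd : Bornology.IsBounded {θ : Fin d → ℝ | f θ ≤ 0})
    (hne : ∃ a ∈ {θ : Fin d → ℝ | f θ ≤ 0}, ∃ b ∈ {θ : Fin d → ℝ | f θ ≤ 0}, a ≠ b)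
    (P : (Fin d → ℝ) → Measure X)
    (hP : ∀ θ ∈ {θ : Fin d → ℝ | f θ ≤ 0}, IsProbabilityMeasure (P θ))
    (hac : ∀ θ ∈ {θ : Fin d → ℝ | f θ ≤ 0}, ∀ θ'' ∈ {θ : Fin d → ℝ | f θ ≤ 0}, P θ ≪ P θ'') :
    ¬ ∃ g : X → (Fin d → ℝ), Measurable g ∧ (∀ x, f (g x) ≤ 0) ∧
      (∀ θ ∈ {θ : Fin d → ℝ | f θ ≤ 0}, Integrable g (P θ)) ∧
      (∀ θ ∈ {θ : Fin d → ℝ | f θ ≤ 0}, ∫ x, g x ∂(P θ) = θ) := by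
  rintro ⟨g, -, hgS, hgi, hgu⟩
  obtain ⟨a, ha, b, hb, hab⟩ := hne
  have hS : IsCompact {θ : Fin d → ℝ | f θ ≤ 0} :=
    Metric.isCompact_of_isClosed_isBounded (isClosed_le hf continuous_const) hbdd
  have hg : IsUnbiasedOn P {θ | f θ ≤ 0} g := fun θ hθ ↦ ⟨hgi θ hθ, hgu θ hθ⟩
  exact hab (hS.subsingleton_of_isUnbiasedOn hP hac hg hgS ha hb)
end

section
/- Fix c > 0 and N ≥ 1. There is no measurable function g : ℝ^N → [c, ∞) with g(X) integrable such that E[g(X)] = θ whenever X = (X_1,...,X_N) has i.i.d. N(0, θ) entries, for all θ ≥ c. -/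
/-!
Take `θ = c`, the extreme point of the parameter set. There `g - c` is nonnegative with mean zero,
so `g = c` almost surely under `N(0, c)^N`. All the Gaussian product laws with positive variance
are mutually absolutely continuous, so `g = c` almost surely under `N(0, 2c)^N` as well, and the
mean of `g` there is `c ≠ 2c`.
-/

open MeasureTheory ProbabilityTheory

namespace MeasureTheory

theorem Measure.AbsolutelyContinuous.pi_fin {n : ℕ} {α : Fin n → Type*}
    [∀ i, MeasurableSpace (α i)] {μ ν : (i : Fin n) → Measure (α i)}
    [∀ i, SigmaFinite (μ i)] [∀ i, SigmaFinite (ν i)] (h : ∀ i, μ i ≪ ν i) :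
    Measure.pi μ ≪ Measure.pi ν := by
  induction n with
  | zero => rw [Measure.pi_of_empty μ, Measure.pi_of_empty ν]
  | succ n ih =>
    let e := MeasurableEquiv.piFinSuccAbove α 0
    rw [← ((measurePreserving_piFinSuccAbove μ 0).symm e).map_eq,
      ← ((measurePreserving_piFinSuccAbove ν 0).symm e).map_eq]
    exact ((h 0).prod (ih fun j => h _)).map e.symm.measurable

theorem ae_eq_const_of_integral_eq_of_ae_le {α : Type*} [MeasurableSpace α] {μ : Measure α}
    [IsProbabilityMeasure μ] {f : α → ℝ} {a : ℝ} (hf : Integrable f μ)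
    (hle : ∀ᵐ x ∂μ, a ≤ f x) (hint : ∫ x, f x ∂μ = a) : f =ᵐ[μ] fun _ => a := by
  have hsub : ∫ x, (f x - a) ∂μ = 0 := by
    rw [integral_sub hf (integrable_const a), hint, integral_const, probReal_univ, one_smul,
      sub_self]
  have hzero : (fun x => f x - a) =ᵐ[μ] 0 :=
    (integral_eq_zero_iff_of_nonneg_ae (hle.mono fun _ => sub_nonneg.2)
      (hf.sub (integrable_const a))).1 hsub
  filter_upwards [hzero] with x hx
  exact sub_eq_zero.1 hx

end MeasureTheory

namespace ProbabilityTheory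

theorem gaussianReal_absolutelyContinuous_gaussianReal (μ μ' : ℝ) {v v' : NNReal} (hv : v ≠ 0)
    (hv' : v' ≠ 0) : gaussianReal μ v ≪ gaussianReal μ' v' :=
  (gaussianReal_absolutelyContinuous μ hv).trans (gaussianReal_absolutelyContinuous' μ' hv')

end ProbabilityTheory

theorem no_unbiased_variance_estimator_general (N : ℕ) (c : NNReal) (hc : 0 < c) :
    ¬ ∃ g : (Fin N → ℝ) → ℝ, Measurable g ∧ (∀ x, (c : ℝ) ≤ g x) ∧
      ∀ θ : NNReal, c ≤ θ →
        Integrable g (Measure.pi fun _ : Fin N => gaussianReal 0 θ) ∧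
        ∫ x, g x ∂(Measure.pi fun _ : Fin N => gaussianReal 0 θ) = (θ : ℝ) := by
  rintro ⟨g, -, hgc, hθ⟩
  let μ (θ : NNReal) : Measure (Fin N → ℝ) := Measure.pi fun _ => gaussianReal 0 θ
  obtain ⟨hint_c, hval_c⟩ := hθ c le_rfl
  have hg_c : g =ᵐ[μ c] fun _ => (c : ℝ) :=
    ae_eq_const_of_integral_eq_of_ae_le hint_c (.of_forall hgc) hval_c
  have hac : μ (2 * c) ≪ μ c := Measure.AbsolutelyContinuous.pi_fin fun _ =>
    gaussianReal_absolutelyContinuous_gaussianReal 0 0 (by positivity) hc.ne'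
  have hval_2c : ∫ x, g x ∂μ (2 * c) = c := by
    rw [integral_congr_ae (hac.ae_eq hg_c), integral_const, probReal_univ, one_smul]
  have h2c_eq_c : ((2 * c : NNReal) : ℝ) = c :=
    (hθ (2 * c) (le_mul_of_one_le_left' one_le_two)).2.symm.trans hval_2c
  have hc_pos : (0 : ℝ) < c := hc
  push_cast at h2c_eq_c
  linarith

theorem no_unbiased_variance_estimator (N : ℕ) (hN : 1 ≤ N) (c : NNReal) (hc : 0 < c) :
    ¬ ∃ g : (Fin N → ℝ) → ℝ, Measurable g ∧ (∀ x, (c : ℝ) ≤ g x) ∧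
      ∀ θ : NNReal, c ≤ θ →
        Integrable g (Measure.pi fun _ : Fin N => gaussianReal 0 θ) ∧
        ∫ x, g x ∂(Measure.pi fun _ : Fin N => gaussianReal 0 θ) = (θ : ℝ) :=
  no_unbiased_variance_estimator_general N c hc
end

section
/- Let 0 < c₁ < c₂. There is no measurable function g : ℝ^N → (c₁, c₂) such that E_θ[g(X)] = θ for all θ ∈ (c₁, c₂), where X has i.i.d. N(0,θ) entries. -/
open MeasureTheory ProbabilityTheory Real
open scoped ENNReal NNReal

lemma my_nnreal_smul_eq (c : ℝ≥0) {α : Type*} [MeasurableSpace α] (μ : Measure α) :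
    c • μ = (c : ℝ≥0∞) • μ := by
  ext s hs; rw [Measure.smul_apply, Measure.smul_apply, ENNReal.smul_def, smul_eq_mul]

lemma my_prod_mono {α β : Type*} [MeasurableSpace α] [MeasurableSpace β]
    {μ ν : Measure α} {μ' ν' : Measure β} [SFinite μ'] [SFinite ν']
    (h : μ ≤ ν) (h' : μ' ≤ ν') : μ.prod μ' ≤ ν.prod ν' := by
  refine Measure.le_iff.mpr fun s hs => ?_
  rw [Measure.prod_apply hs, Measure.prod_apply hs]
  exact le_trans (lintegral_mono fun x => Measure.le_iff'.mp h' _) (lintegral_mono' h le_rfl)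

lemma my_pi_mono : ∀ (n : ℕ) (μ ν : Fin n → Measure ℝ),
    (∀ i, IsFiniteMeasure (μ i)) → (∀ i, IsFiniteMeasure (ν i)) →
    (∀ i, μ i ≤ ν i) → Measure.pi μ ≤ Measure.pi ν := by
  intro n
  induction n with
  | zero =>
    intro μ ν _ _ _
    rw [Measure.pi_of_empty μ, Measure.pi_of_empty ν]
  | succ n ih =>
    intro μ ν hμ hν h
    haveI := hμ; haveI := hν
    have e := MeasurableEquiv.piFinSuccAbove (fun _ : Fin (n + 1) => ℝ) 0
    have h1 := (measurePreserving_piFinSuccAbove μ 0).symm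
      (MeasurableEquiv.piFinSuccAbove (fun _ : Fin (n + 1) => ℝ) 0)
    have h2 := (measurePreserving_piFinSuccAbove ν 0).symm
      (MeasurableEquiv.piFinSuccAbove (fun _ : Fin (n + 1) => ℝ) 0)
    rw [← h1.map_eq, ← h2.map_eq]
    refine Measure.map_mono ?_ (MeasurableEquiv.measurable _)
    exact my_prod_mono (h 0) (ih _ _ (fun i => hμ _) (fun i => hν _) (fun i => h _))

lemma my_pi_smul (n : ℕ) (c : ℝ≥0) (m : Measure ℝ) [IsFiniteMeasure m] :
    Measure.pi (fun _ : Fin n => c • m) = ((c : ℝ≥0∞) ^ n) • Measure.pi (fun _ : Fin n => m) := by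
  refine (Measure.pi_eq fun s hs => ?_)
  rw [Measure.smul_apply, Measure.pi_pi]
  simp only [Measure.smul_apply, ENNReal.smul_def, smul_eq_mul, Finset.prod_mul_distrib, Finset.prod_const, Finset.card_univ, Fintype.card_fin]

lemma my_pdf_le (v₁ v₂ : ℝ≥0) (h0 : 0 < v₁) (h : v₁ ≤ v₂) (x : ℝ) :
    gaussianPDFReal 0 v₁ x ≤ Real.sqrt ((v₂ : ℝ) / v₁) * gaussianPDFReal 0 v₂ x := by
  have h01 : (0 : ℝ) < v₁ := h0
  have h02 : (0 : ℝ) < v₂ := lt_of_lt_of_le h01 h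
  have hπ : (0 : ℝ) < π := Real.pi_pos
  have key : Real.sqrt ((v₂ : ℝ) / v₁) * (Real.sqrt (2 * π * v₂))⁻¹ = (Real.sqrt (2 * π * v₁))⁻¹ := by
    rw [← Real.sqrt_inv, ← Real.sqrt_inv, ← Real.sqrt_mul (by positivity)]
    congr 1
    field_simp
  rw [gaussianPDFReal, gaussianPDFReal, ← mul_assoc, key]
  have hexp : rexp (-(x - 0) ^ 2 / (2 * (v₁ : ℝ))) ≤ rexp (-(x - 0) ^ 2 / (2 * (v₂ : ℝ))) := by
    rw [Real.exp_le_exp, neg_div, neg_div, neg_le_neg_iff]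
    gcongr
    all_goals first | positivity | linarith
  exact mul_le_mul_of_nonneg_left hexp (by positivity)

lemma my_gauss_le (v₁ v₂ : ℝ≥0) (h0 : 0 < v₁) (h : v₁ ≤ v₂) :
    gaussianReal 0 v₁ ≤ (NNReal.sqrt (v₂ / v₁)) • gaussianReal 0 v₂ := by
  have h2 : v₂ ≠ 0 := (lt_of_lt_of_le h0 h).ne'
  rw [gaussianReal_of_var_ne_zero _ h0.ne', gaussianReal_of_var_ne_zero _ h2,
    my_nnreal_smul_eq, ← withDensity_smul _ (measurable_gaussianPDF _ _)]
  refine withDensity_mono (Filter.Eventually.of_forall fun x => ?_)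
  simp only [Pi.smul_apply, smul_eq_mul, gaussianPDF]
  rw [← ENNReal.ofReal_coe_nnreal, ← ENNReal.ofReal_mul (by positivity)]
  refine ENNReal.ofReal_le_ofReal ?_
  have : ((NNReal.sqrt (v₂ / v₁) : ℝ≥0) : ℝ) = Real.sqrt ((v₂ : ℝ) / v₁) := by
    rw [Real.coe_sqrt, NNReal.coe_div]

  rw [this]
  exact my_pdf_le v₁ v₂ h0 h x

theorem no_unbiased_variance_estimator_open (N : ℕ) (c₁ c₂ : NNReal)
    (hc₁ : 0 < c₁) (hc : c₁ < c₂) :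
    ¬ ∃ g : (Fin N → ℝ) → ℝ, Measurable g ∧ (∀ x, (c₁ : ℝ) < g x ∧ g x < (c₂ : ℝ)) ∧
      ∀ θ : NNReal, c₁ < θ → θ < c₂ →
        Integrable g (Measure.pi fun _ : Fin N => gaussianReal 0 θ) ∧
        ∫ x, g x ∂(Measure.pi fun _ : Fin N => gaussianReal 0 θ) = (θ : ℝ) := by
  rintro ⟨g, hgm, hgb, hgint⟩
  set μ : NNReal → Measure (Fin N → ℝ) := fun v => Measure.pi fun _ : Fin N => gaussianReal 0 v
    with hμdef
  set h : (Fin N → ℝ) → ℝ≥0∞ := fun x => ENNReal.ofReal (g x - c₁) with hhdef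
  have hhm : Measurable h := (hgm.sub measurable_const).ennreal_ofReal
  -- L > 0
  have hL : 0 < ∫⁻ x, h x ∂(μ c₁) := by
    rw [lintegral_pos_iff_support hhm]
    have : Function.support h = Set.univ := by
      ext x
      simp only [Function.mem_support, Set.mem_univ, iff_true, hhdef]
      exact (ENNReal.ofReal_pos.mpr (sub_pos.mpr (hgb x).1)).ne'
    rw [this]
    haveI : IsProbabilityMeasure (μ c₁) := by
      rw [hμdef]; infer_instance
    simp [measure_univ]
  set L := ∫⁻ x, h x ∂(μ c₁) with hLdef
  -- choose η with ofReal η < L, η > 0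
  obtain ⟨η, hη0, hηL⟩ : ∃ η : ℝ, 0 < η ∧ ENNReal.ofReal η < L := by
    rcases eq_or_ne L ⊤ with hT | hT
    · exact ⟨1, one_pos, by simp [hT]⟩
    · have hLt : 0 < L.toReal := ENNReal.toReal_pos hL.ne' hT
      refine ⟨L.toReal / 2, by linarith, ?_⟩
      rw [ENNReal.ofReal_lt_iff_lt_toReal (by linarith) hT]
      linarith
  -- constants
  set K : ℝ≥0 := NNReal.sqrt (c₂ / c₁) with hKdef
  have hKp : (0 : ℝ) < (K : ℝ) := by
    have h1 : (0 : ℝ≥0) < K := by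
      rw [hKdef]
      exact NNReal.sqrt_pos.mpr (div_pos (hc₁.trans hc) hc₁)
    exact_mod_cast h1
  have hK0 : (0 : ℝ) < (K : ℝ) ^ N := pow_pos hKp N
  -- choose θ
  have hc₁R : (0 : ℝ) < (c₁ : ℝ) := hc₁
  have hcR : (c₁ : ℝ) < (c₂ : ℝ) := hc
  set δ : ℝ := min (((c₂ : ℝ) - c₁) / 2) (η / (2 * (K : ℝ) ^ N)) with hδdef
  have hδ0 : 0 < δ := lt_min (by linarith) (div_pos hη0 (mul_pos two_pos hK0))
  set θ : NNReal := c₁ + Real.toNNReal δ with hθdef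
  have hθR : (θ : ℝ) = (c₁ : ℝ) + δ := by
    rw [hθdef, NNReal.coe_add, Real.coe_toNNReal _ hδ0.le]
  have hθ1 : c₁ < θ := by
    rw [← NNReal.coe_lt_coe, hθR]; linarith
  have hθ2 : θ < c₂ := by
    rw [← NNReal.coe_lt_coe, hθR]
    have : δ ≤ ((c₂ : ℝ) - c₁) / 2 := min_le_left _ _
    linarith
  obtain ⟨hint, hval⟩ := hgint θ hθ1 hθ2
  -- ∫⁻ h ∂(μ θ) = ofReal (θ - c₁)
  haveI : IsProbabilityMeasure (μ θ) := by rw [hμdef]; infer_instance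
  have hval2 : ∫⁻ x, h x ∂(μ θ) = ENNReal.ofReal ((θ : ℝ) - c₁) := by
    have hInt2 : Integrable (fun x => g x - (c₁ : ℝ)) (μ θ) := hint.sub (integrable_const _)
    rw [hhdef]
    rw [← ofReal_integral_eq_lintegral_ofReal hInt2
      (Filter.Eventually.of_forall fun x => sub_nonneg.mpr (hgb x).1.le)]
    congr 1
    rw [integral_sub hint (integrable_const _), hval, integral_const]
    simp
  -- measure comparison
  set c : ℝ≥0 := NNReal.sqrt (θ / c₁) with hcdef
  have hcomp : μ c₁ ≤ ((c : ℝ≥0∞) ^ N) • μ θ := by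
    have h1 : gaussianReal 0 c₁ ≤ c • gaussianReal 0 θ := my_gauss_le c₁ θ hc₁ hθ1.le
    have h2 : μ c₁ ≤ Measure.pi (fun _ : Fin N => c • gaussianReal 0 θ) := by
      refine my_pi_mono N _ _ (fun i => by infer_instance) (fun i => by infer_instance)
        (fun i => h1)
    rw [my_pi_smul N c (gaussianReal 0 θ)] at h2
    exact h2
  have hcK : c ≤ K := by
    rw [hcdef, hKdef]
    refine NNReal.sqrt_le_sqrt.mpr ?_
    gcongr
    all_goals exact hθ2.le
  -- the chain
  have chain : L ≤ ENNReal.ofReal ((K : ℝ) ^ N * ((θ : ℝ) - c₁)) := by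
    calc L ≤ ∫⁻ x, h x ∂(((c : ℝ≥0∞) ^ N) • μ θ) := lintegral_mono' hcomp le_rfl
    _ = (c : ℝ≥0∞) ^ N * ∫⁻ x, h x ∂(μ θ) := lintegral_smul_measure _ _
    _ ≤ (K : ℝ≥0∞) ^ N * ENNReal.ofReal ((θ : ℝ) - c₁) := by
        rw [hval2]
        exact mul_le_mul_of_nonneg_right (pow_le_pow_left' (ENNReal.coe_le_coe.mpr hcK) N) zero_le
    _ = ENNReal.ofReal ((K : ℝ) ^ N * ((θ : ℝ) - c₁)) := by
        rw [ENNReal.ofReal_mul (by positivity)]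
        congr 1
        rw [← NNReal.coe_pow, ENNReal.ofReal_coe_nnreal, ENNReal.coe_pow]
  -- contradiction
  have hsmall : (K : ℝ) ^ N * ((θ : ℝ) - c₁) ≤ η / 2 := by
    rw [hθR]
    have hδ2 : δ ≤ η / (2 * (K : ℝ) ^ N) := min_le_right _ _
    have : (K : ℝ) ^ N * δ ≤ (K : ℝ) ^ N * (η / (2 * (K : ℝ) ^ N)) := by
      exact mul_le_mul_of_nonneg_left hδ2 hK0.le
    calc (K : ℝ) ^ N * ((c₁ : ℝ) + δ - c₁) = (K : ℝ) ^ N * δ := by ring_nf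
    _ ≤ (K : ℝ) ^ N * (η / (2 * (K : ℝ) ^ N)) := this
    _ = η / 2 := by field_simp
  have : L ≤ ENNReal.ofReal η :=
    chain.trans (ENNReal.ofReal_le_ofReal (hsmall.trans (by linarith)))
  exact absurd (this.trans_lt hηL) (lt_irrefl _)
end

section
/- Let A be a known real n×d matrix and Z a standard Gaussian vector in ℝ^n. For the model X = Aθ + Z with constraint set Θ' = {θ ∈ ℝ^d : Σ_i |θ_i| ≤ 1}, there exists no measurable g : ℝ^n → Θ' such that E_θ[g(X)] = θ for all θ ∈ Θ'. -/
open MeasureTheory ProbabilityTheory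

lemma pi_absolutelyContinuous {n : ℕ} (μ ν : Fin n → Measure ℝ)
    [∀ i, IsProbabilityMeasure (μ i)] [∀ i, IsProbabilityMeasure (ν i)]
    (h : ∀ i, μ i ≪ ν i) : Measure.pi μ ≪ Measure.pi ν := by
  induction n with
  | zero =>
      rw [Measure.pi_of_empty, Measure.pi_of_empty]
  | succ n ih =>
      set e := MeasurableEquiv.piFinSuccAbove (fun _ : Fin (n + 1) => ℝ) 0 with he
      have hμ := measurePreserving_piFinSuccAbove μ 0
      have hν := measurePreserving_piFinSuccAbove ν 0
      have hmap : (Measure.pi μ).map e ≪ (Measure.pi ν).map e := by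
        rw [hμ.map_eq, hν.map_eq]
        exact Measure.AbsolutelyContinuous.prod (h 0)
          (ih (fun i => μ ((0 : Fin (n+1)).succAbove i))
            (fun i => ν ((0 : Fin (n+1)).succAbove i))
            (fun i => h _))
      have hid : (⇑e.symm ∘ ⇑e) = id := by ext x; simp
      have := hmap.map e.symm.measurable
      simp only [Measure.map_map e.symm.measurable e.measurable, hid, Measure.map_id] at this
      exact this

theorem no_unbiased_sparse_estimator (n d : ℕ) (A : Matrix (Fin n) (Fin d) ℝ) (hd : 1 ≤ d) :
    ¬ ∃ g : (Fin n → ℝ) → (Fin d → ℝ), Measurable g ∧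
      (∀ x, ∑ i, |g x i| ≤ 1) ∧
      ∀ θ : Fin d → ℝ, (∑ i, |θ i|) ≤ 1 →
        Integrable g (Measure.pi fun i : Fin n => gaussianReal (A.mulVec θ i) 1) ∧
        ∫ x, g x ∂(Measure.pi fun i : Fin n => gaussianReal (A.mulVec θ i) 1) = θ := by
  rintro ⟨g, hg, hbound, hunb⟩
  set i0 : Fin d := ⟨0, hd⟩
  set θ1 : Fin d → ℝ := fun i => if i = i0 then 1 else 0 with hθ1
  have hsum1 : (∑ i, |θ1 i|) = 1 := by
    simp only [hθ1, apply_ite abs, abs_one, abs_zero]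
    simp
  set μ1 := Measure.pi fun i : Fin n => gaussianReal (A.mulVec θ1 i) 1 with hμ1
  set μ0 := Measure.pi fun i : Fin n => gaussianReal (A.mulVec 0 i) 1 with hμ0
  obtain ⟨hInt1, hEq1⟩ := hunb θ1 hsum1.le
  obtain ⟨hInt0, hEq0⟩ := hunb 0 (by simp)
  -- component at i0
  have hcomp : ∀ (μ : Measure (Fin n → ℝ)) (h : Integrable g μ),
      ∫ x, g x i0 ∂μ = (∫ x, g x ∂μ) i0 := by
    intro μ h
    exact (ContinuousLinearMap.proj (R := ℝ) (φ := fun _ : Fin d => ℝ) i0).integral_comp_comm h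
  have hInt1' : Integrable (fun x => g x i0) μ1 :=
    (ContinuousLinearMap.proj (R := ℝ) (φ := fun _ : Fin d => ℝ) i0).integrable_comp hInt1
  have h1 : ∫ x, g x i0 ∂μ1 = 1 := by
    rw [hcomp μ1 hInt1, hEq1]; simp [hθ1]
  have hle : ∀ x, g x i0 ≤ 1 := fun x =>
    le_trans (le_trans (le_abs_self _)
      (Finset.single_le_sum (fun i _ => abs_nonneg (g x i)) (Finset.mem_univ i0))) (hbound x)
  -- g x i0 = 1 a.e. μ1
  have hprob1 : IsProbabilityMeasure μ1 := by rw [hμ1]; infer_instance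
  have hprob0 : IsProbabilityMeasure μ0 := by rw [hμ0]; infer_instance
  have hzero : ∫ x, (1 - g x i0) ∂μ1 = 0 := by
    rw [integral_sub (integrable_const 1) hInt1', h1]
    simp
  have hae1 : (fun x => 1 - g x i0) =ᵐ[μ1] 0 := by
    rw [← integral_eq_zero_iff_of_nonneg (fun x => sub_nonneg.2 (hle x))
      ((integrable_const 1).sub hInt1')]
    exact hzero
  -- transfer to μ0
  have hac : μ0 ≪ μ1 := by
    rw [hμ0, hμ1]
    exact pi_absolutelyContinuous _ _ (fun i =>
      (gaussianReal_absolutelyContinuous _ one_ne_zero).trans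
        (gaussianReal_absolutelyContinuous' _ one_ne_zero))
  have hae0 : (fun x => 1 - g x i0) =ᵐ[μ0] 0 := hac.ae_eq hae1
  have hg0 : (fun x => g x i0) =ᵐ[μ0] (fun _ => 1) := by
    filter_upwards [hae0] with x hx
    have : (1 : ℝ) - g x i0 = 0 := hx
    linarith
  have : ∫ x, g x i0 ∂μ0 = 1 := by
    rw [integral_congr_ae hg0]; simp
  rw [hcomp μ0 hInt0, hEq0] at this
  simp at this
end

section
/- Let R > 0 and p ≥ 1, and let Θ' = {θ ∈ ℝ^d : ‖θ‖_p = R} (the ℓ^p sphere), with d ≥ 1. If {P_θ : θ ∈ Θ'} are pairwise mutually absolutely continuous probability measures, then no measurable estimator g with range in Θ' satisfies E_{P_θ}[g] = θ for all θ ∈ Θ'. -/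
open MeasureTheory

theorem no_unbiased_on_lp_sphere {d : ℕ} (hd : 1 ≤ d) {X : Type*} [MeasurableSpace X]
    (R : ℝ) (hR : 0 < R) (p : ℝ) (hp : 1 ≤ p)
    (P : (Fin d → ℝ) → Measure X)
    (hP : ∀ θ ∈ {θ : Fin d → ℝ | (∑ i, |θ i| ^ p) ^ (1 / p) = R}, IsProbabilityMeasure (P θ))
    (hac : ∀ θ ∈ {θ : Fin d → ℝ | (∑ i, |θ i| ^ p) ^ (1 / p) = R},
      ∀ θ'' ∈ {θ : Fin d → ℝ | (∑ i, |θ i| ^ p) ^ (1 / p) = R}, P θ ≪ P θ'') :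
    ¬ ∃ g : X → (Fin d → ℝ), Measurable g ∧
      (∀ x, (∑ i, |g x i| ^ p) ^ (1 / p) = R) ∧
      (∀ θ ∈ {θ : Fin d → ℝ | (∑ i, |θ i| ^ p) ^ (1 / p) = R}, Integrable g (P θ)) ∧
      (∀ θ ∈ {θ : Fin d → ℝ | (∑ i, |θ i| ^ p) ^ (1 / p) = R}, ∫ x, g x ∂(P θ) = θ) := by
  rintro ⟨g, hgm, hgS, hgi, hgu⟩
  have hp0 : p ≠ 0 := by positivity
  have hppos : (0 : ℝ) < p := by linarith
  set i0 : Fin d := ⟨0, hd⟩ with hi0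
  set θ : Fin d → ℝ := fun i => if i = i0 then R else 0 with hθdef
  -- sum computation for θ and -θ
  have hsum : ∑ i, |θ i| ^ p = R ^ p := by
    have h : ∀ i : Fin d, |θ i| ^ p = if i = i0 then R ^ p else 0 := by
      intro i
      by_cases h : i = i0 <;>
        simp [hθdef, h, abs_of_pos hR, Real.zero_rpow hp0]
    simp [h]
  have hsum' : ∑ i, |(-θ) i| ^ p = R ^ p := by
    simpa using hsum
  have hRpow : (R ^ p) ^ (1 / p) = R := by
    rw [one_div, Real.rpow_rpow_inv hR.le hp0]
  have hθmem : θ ∈ {θ : Fin d → ℝ | (∑ i, |θ i| ^ p) ^ (1 / p) = R} := by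
    simp only [Set.mem_setOf_eq, hsum, hRpow]
  have hθ'mem : -θ ∈ {θ : Fin d → ℝ | (∑ i, |θ i| ^ p) ^ (1 / p) = R} := by
    simp only [Set.mem_setOf_eq, hsum', hRpow]
  -- bound on the first coordinate
  have hb : ∀ x, |g x i0| ≤ R := by
    intro x
    have hnn : ∀ i ∈ Finset.univ, (0:ℝ) ≤ |g x i| ^ p :=
      fun i _ => Real.rpow_nonneg (abs_nonneg _) p
    have hSnn : (0:ℝ) ≤ ∑ i, |g x i| ^ p := Finset.sum_nonneg hnn
    have hSx : ∑ i, |g x i| ^ p = R ^ p := by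
      have := hgS x
      calc ∑ i, |g x i| ^ p = ((∑ i, |g x i| ^ p) ^ (1 / p)) ^ p := by
            rw [one_div, Real.rpow_inv_rpow hSnn hp0]
        _ = R ^ p := by rw [this]
    have hle : |g x i0| ^ p ≤ R ^ p := by
      calc |g x i0| ^ p ≤ ∑ i, |g x i| ^ p :=
            Finset.single_le_sum hnn (Finset.mem_univ i0)
        _ = R ^ p := hSx
    by_contra hcon
    push_neg at hcon
    exact absurd hle (not_le.mpr (Real.rpow_lt_rpow hR.le hcon hppos))
  -- component integral equals component of vector integral
  have hcomp : ∀ τ ∈ {θ : Fin d → ℝ | (∑ i, |θ i| ^ p) ^ (1 / p) = R},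
      ∫ x, g x i0 ∂(P τ) = (∫ x, g x ∂(P τ)) i0 := by
    intro τ hτ
    have := ((ContinuousLinearMap.proj (R := ℝ) (φ := fun _ : Fin d => ℝ) i0).integral_comp_comm
      (hgi τ hτ))
    simp only [ContinuousLinearMap.proj_apply] at this
    exact this
  haveI := hP θ hθmem
  haveI := hP (-θ) hθ'mem
  have hint : Integrable (fun x => g x i0) (P θ) := by
    refine (integrable_const R).mono' (((measurable_pi_apply i0).comp hgm).aestronglyMeasurable)
      (ae_of_all _ fun x => ?_)
    simpa using hb x
  have hfθ : ∫ x, g x i0 ∂(P θ) = R := by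
    rw [hcomp θ hθmem, hgu θ hθmem]
    simp [hθdef]
  -- a.e. equality under P θ
  have hzero : ∫ x, (R - g x i0) ∂(P θ) = 0 := by
    rw [integral_sub (integrable_const R) hint, hfθ, integral_const]
    simp
  have hae : (fun x => R - g x i0) =ᵐ[P θ] 0 :=
    (integral_eq_zero_iff_of_nonneg (fun x => sub_nonneg.mpr ((abs_le.mp (hb x)).2))
      ((integrable_const R).sub hint)).mp hzero
  have hgR : (fun x => g x i0) =ᵐ[P θ] fun _ => R :=
    hae.mono fun x hx => by have := sub_eq_zero.mp (by simpa using hx); linarith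
  have hgR' : (fun x => g x i0) =ᵐ[P (-θ)] fun _ => R :=
    hgR.filter_mono (hac (-θ) hθ'mem θ hθmem).ae_le
  have h1 : ∫ x, g x i0 ∂(P (-θ)) = R := by
    rw [integral_congr_ae hgR', integral_const]
    simp
  have h2 : ∫ x, g x i0 ∂(P (-θ)) = -R := by
    rw [hcomp (-θ) hθ'mem, hgu (-θ) hθ'mem]
    simp [hθdef]
  rw [h1] at h2
  linarith
end

section
/- Every vertex of a nonempty compact polyhedron P = {θ ∈ ℝ^d : Σ_i α_{i,k} θ_i ≤ B_k, k = 1,...,m} is an extreme point of P, and if P is compact with more than one point and {P_θ : θ ∈ P} are pairwise mutually absolutely continuous probability measures, then no unbiased estimator with range in P exists. -/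
/-!
A point at which some linear functional is strictly maximal over `P` cannot lie inside a segment of
`P`, since the functional is affine along the segment.

If `g` were an unbiased estimator with values in a compact set `P` containing `a ≠ b`, take a
continuous linear functional `L` with `L a ≠ L b` and a maximiser `v` of `L` on `P`. Then `L ∘ g`
is bounded by `L v` and has mean `L v` under `P_v`, so `L ∘ g = L v` almost surely under `P_v`,
hence under every `P_θ`. Taking means gives `L θ = L v` for all `θ ∈ P`, contradicting
`L a ≠ L b`.
-/

open MeasureTheory

theorem mem_extremePoints_of_forall_lt {𝕜 E : Type*} [Field 𝕜] [LinearOrder 𝕜]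
    [IsStrictOrderedRing 𝕜] [AddCommGroup E] [Module 𝕜 E] {S : Set E} {v : E} (f : E →ₗ[𝕜] 𝕜)
    (hv : v ∈ S) (hf : ∀ y ∈ S, y ≠ v → f y < f v) : v ∈ S.extremePoints 𝕜 := by
  refine ⟨hv, fun x hx y hy ⟨a, b, ha, hb, hab, hxy⟩ => ?_⟩
  by_contra hxv
  have hyv : f y ≤ f v := by
    rcases eq_or_ne y v with rfl | hyv
    · exact le_rfl
    · exact (hf y hy hyv).le
  have : f v < f v := calc
    f v = a * f x + b * f y := by rw [← hxy, map_add, map_smul, map_smul, smul_eq_mul, smul_eq_mul]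
    _ < a * f v + b * f v :=
      add_lt_add_of_lt_of_le (mul_lt_mul_of_pos_left (hf x hx hxv) ha)
        (mul_le_mul_of_nonneg_left hyv hb.le)
    _ = f v := by rw [← add_mul, hab, one_mul]
  exact this.false

theorem ae_eq_const_of_ae_le_of_integral_eq {X : Type*} [MeasurableSpace X] {μ : Measure X}
    [IsProbabilityMeasure μ] {f : X → ℝ} {c : ℝ} (hf : Integrable f μ) (hle : ∀ᵐ x ∂μ, f x ≤ c)
    (hint : ∫ x, f x ∂μ = c) : f =ᵐ[μ] fun _ => c :=
  (integral_eq_iff_of_ae_le hf (integrable_const c) hle).1 (by simp [hint])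

section Unbiased

variable {X E : Type*} [MeasurableSpace X] [NormedAddCommGroup E] [NormedSpace ℝ E]
  [CompleteSpace E] {S : Set E} {P : E → Measure X} {g : X → E}

theorem apply_eq_of_isMaxOn_of_unbiased (hgS : ∀ x, g x ∈ S)
    (hint : ∀ θ ∈ S, Integrable g (P θ)) (hmean : ∀ θ ∈ S, ∫ x, g x ∂P θ = θ)
    (L : E →L[ℝ] ℝ) {v θ : E} (hv : v ∈ S) (hθ : θ ∈ S) (hmax : IsMaxOn L S v)
    [IsProbabilityMeasure (P v)] [IsProbabilityMeasure (P θ)] (hac : P θ ≪ P v) :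
    L θ = L v := by
  have hmean_L : ∀ θ ∈ S, ∫ x, L (g x) ∂P θ = L θ := fun θ hθ => by
    rw [L.integral_comp_comm (hint θ hθ), hmean θ hθ]
  have hconst : (fun x => L (g x)) =ᵐ[P v] fun _ => L v :=
    ae_eq_const_of_ae_le_of_integral_eq (L.integrable_comp (hint v hv))
      (ae_of_all _ fun x => hmax (hgS x)) (hmean_L v hv)
  rw [← hmean_L θ hθ, integral_eq_const (hconst.filter_mono hac.ae_le)]

theorem subsingleton_of_isCompact_of_unbiased (hS : IsCompact S)
    (hprob : ∀ θ ∈ S, IsProbabilityMeasure (P θ)) (hac : ∀ θ ∈ S, ∀ θ' ∈ S, P θ ≪ P θ')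
    (hgS : ∀ x, g x ∈ S) (hint : ∀ θ ∈ S, Integrable g (P θ))
    (hmean : ∀ θ ∈ S, ∫ x, g x ∂P θ = θ) : S.Subsingleton := by
  intro a ha b hb
  by_contra hab
  obtain ⟨L, hL⟩ := SeparatingDual.exists_separating_of_ne (R := ℝ) hab
  obtain ⟨v, hv, hmax⟩ := hS.exists_isMaxOn ⟨a, ha⟩ L.continuous.continuousOn
  have := hprob v hv
  have := hprob a ha
  have := hprob b hb
  have hLa := apply_eq_of_isMaxOn_of_unbiased hgS hint hmean L hv ha hmax (hac a ha v hv)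
  have hLb := apply_eq_of_isMaxOn_of_unbiased hgS hint hmean L hv hb hmax (hac b hb v hv)
  exact hL (hLa.trans hLb.symm)

end Unbiased

theorem polyhedron_vertices_extreme_and_no_unbiased {d m : ℕ} {X : Type*} [MeasurableSpace X]
    (α : Fin m → Fin d → ℝ) (B : Fin m → ℝ) :
    (∀ v ∈ {θ : Fin d → ℝ | ∀ k, ∑ i, α k i * θ i ≤ B k},
      (∃ c : Fin d → ℝ, ∀ y ∈ {θ : Fin d → ℝ | ∀ k, ∑ i, α k i * θ i ≤ B k},
        y ≠ v → ∑ i, c i * y i < ∑ i, c i * v i) →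
      v ∈ Set.extremePoints ℝ {θ : Fin d → ℝ | ∀ k, ∑ i, α k i * θ i ≤ B k}) ∧
    (IsCompact {θ : Fin d → ℝ | ∀ k, ∑ i, α k i * θ i ≤ B k} →
     (∃ a ∈ {θ : Fin d → ℝ | ∀ k, ∑ i, α k i * θ i ≤ B k},
       ∃ b ∈ {θ : Fin d → ℝ | ∀ k, ∑ i, α k i * θ i ≤ B k}, a ≠ b) →
     ∀ P : (Fin d → ℝ) → Measure X,
      (∀ θ ∈ {θ : Fin d → ℝ | ∀ k, ∑ i, α k i * θ i ≤ B k}, IsProbabilityMeasure (P θ)) →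
      (∀ θ ∈ {θ : Fin d → ℝ | ∀ k, ∑ i, α k i * θ i ≤ B k},
        ∀ θ'' ∈ {θ : Fin d → ℝ | ∀ k, ∑ i, α k i * θ i ≤ B k}, P θ ≪ P θ'') →
      ¬ ∃ g : X → (Fin d → ℝ), Measurable g ∧
        (∀ x, g x ∈ {θ : Fin d → ℝ | ∀ k, ∑ i, α k i * θ i ≤ B k}) ∧
        (∀ θ ∈ {θ : Fin d → ℝ | ∀ k, ∑ i, α k i * θ i ≤ B k}, Integrable g (P θ)) ∧
        (∀ θ ∈ {θ : Fin d → ℝ | ∀ k, ∑ i, α k i * θ i ≤ B k}, ∫ x, g x ∂(P θ) = θ)) := by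
  refine ⟨fun v hv ⟨c, hc⟩ => mem_extremePoints_of_forall_lt (dotProductEquiv ℝ (Fin d) c) hv hc,
    ?_⟩
  rintro hS ⟨a, ha, b, hb, hab⟩ P hprob hac ⟨g, -, hgS, hint, hmean⟩
  exact hab (subsingleton_of_isCompact_of_unbiased hS hprob hac hgS hint hmean ha hb)
end

section
/- Let Θ' ⊂ [−π, π] be a compact set with more than one point such that Θ' ≠ [−π, π] has an extreme point θ_e, and let {P_θ : θ ∈ Θ'} be pairwise mutually absolutely continuous probability measures. Then there is no measurable g with range in Θ' that is unbiased, i.e., E_{P_θ}[g] = θ for all θ ∈ Θ'. In particular, restricting a circular parameter to a compact proper subset of [−π, π] with an extreme point precludes (standard) unbiased estimation. -/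
/-! An extreme point `θe` of a subset of `ℝ` is an upper or a lower bound of it. An unbiased `g`
with values in `Θ'` therefore lies on one side of `θe` and has mean `θe` under `P θe`, so `g = θe`
`P θe`-almost surely. By mutual absolute continuity `g = θe` holds `P θ`-almost surely for every
`θ ∈ Θ'` as well, so `E_{P θ}[g] = θe ≠ θ` for any other point `θ` of `Θ'`. -/

open MeasureTheory

theorem Set.mem_upperBounds_or_mem_lowerBounds_of_mem_extremePoints {𝕜 : Type*} [Field 𝕜]
    [LinearOrder 𝕜] [IsStrictOrderedRing 𝕜] {s : Set 𝕜} {x : 𝕜} (hx : x ∈ s.extremePoints 𝕜) :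
    x ∈ upperBounds s ∨ x ∈ lowerBounds s := by
  by_contra! h
  simp only [mem_upperBounds, mem_lowerBounds, not_forall, not_le, exists_prop] at h
  obtain ⟨⟨a, ha, hxa⟩, ⟨b, hb, hbx⟩⟩ := h
  have hseg : x ∈ openSegment 𝕜 b a := by
    rw [openSegment_eq_Ioo (hbx.trans hxa)]
    exact ⟨hbx, hxa⟩
  exact hbx.ne (hx.2 hb ha hseg)

theorem MeasureTheory.ae_eq_const_of_integral_eq_of_ae_bound {α : Type*} [MeasurableSpace α]
    {μ : Measure α} [IsProbabilityMeasure μ] {f : α → ℝ} {c : ℝ} (hf : Integrable f μ)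
    (hbound : (∀ᵐ x ∂μ, f x ≤ c) ∨ ∀ᵐ x ∂μ, c ≤ f x) (hint : ∫ x, f x ∂μ = c) :
    f =ᵐ[μ] fun _ ↦ c := by
  have hint' : ∫ x, f x ∂μ = ∫ _, c ∂μ := by simp [hint]
  rcases hbound with hle | hge
  · exact (integral_eq_iff_of_ae_le hf (integrable_const c) hle).1 hint'
  · exact ((integral_eq_iff_of_ae_le (integrable_const c) hf hge).1 hint'.symm).symm

theorem no_unbiased_periodic_general {X : Type*} [MeasurableSpace X]
    (Θ' : Set ℝ) (hne : ∃ a ∈ Θ', ∃ b ∈ Θ', a ≠ b)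
    (θe : ℝ) (hθe : θe ∈ Set.extremePoints ℝ Θ')
    (P : ℝ → Measure X)
    (hP : ∀ θ ∈ Θ', IsProbabilityMeasure (P θ))
    (hac : ∀ θ ∈ Θ', ∀ θ'' ∈ Θ', P θ ≪ P θ'') :
    ¬ ∃ g : X → ℝ, Measurable g ∧ (∀ x, g x ∈ Θ') ∧
      (∀ θ ∈ Θ', Integrable g (P θ)) ∧
      (∀ θ ∈ Θ', ∫ x, g x ∂(P θ) = θ) := by
  rintro ⟨g, -, hgΘ, hgi, hgu⟩
  have hθeΘ : θe ∈ Θ' := hθe.1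
  obtain ⟨θ, hθ, hθne⟩ := Set.Nontrivial.exists_ne hne θe
  have := hP θe hθeΘ
  have := hP θ hθ
  have hbound : (∀ᵐ x ∂P θe, g x ≤ θe) ∨ ∀ᵐ x ∂P θe, θe ≤ g x :=
    (Set.mem_upperBounds_or_mem_lowerBounds_of_mem_extremePoints hθe).imp
      (fun h ↦ ae_of_all _ fun x ↦ h (hgΘ x)) (fun h ↦ ae_of_all _ fun x ↦ h (hgΘ x))
  have hae : g =ᵐ[P θe] fun _ ↦ θe :=
    ae_eq_const_of_integral_eq_of_ae_bound (hgi θe hθeΘ) hbound (hgu θe hθeΘ)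
  have hmean : ∫ x, g x ∂(P θ) = θe := by
    rw [integral_congr_ae ((hac θ hθ θe hθeΘ).ae_eq hae)]
    simp
  exact hθne ((hgu θ hθ).symm.trans hmean)

theorem no_unbiased_periodic {X : Type*} [MeasurableSpace X]
    (Θ' : Set ℝ) (hsub : Θ' ⊆ Set.Icc (-Real.pi) Real.pi)
    (hproper : Θ' ≠ Set.Icc (-Real.pi) Real.pi)
    (hcpt : IsCompact Θ') (hne : ∃ a ∈ Θ', ∃ b ∈ Θ', a ≠ b)
    (θe : ℝ) (hθe : θe ∈ Set.extremePoints ℝ Θ')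
    (P : ℝ → Measure X)
    (hP : ∀ θ ∈ Θ', IsProbabilityMeasure (P θ))
    (hac : ∀ θ ∈ Θ', ∀ θ'' ∈ Θ', P θ ≪ P θ'') :
    ¬ ∃ g : X → ℝ, Measurable g ∧ (∀ x, g x ∈ Θ') ∧
      (∀ θ ∈ Θ', Integrable g (P θ)) ∧
      (∀ θ ∈ Θ', ∫ x, g x ∂(P θ) = θ) :=
  no_unbiased_periodic_general Θ' hne θe hθe P hP hac
end
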